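/- With the intertwiners Φ = x_n t_{s_{n−1}} t_{s_{n−2}} ⋯ t_{s_1} and Ψ = y_1 t_{s_1} t_{s_2} ⋯ t_{s_{n−1}} in H: Ψ Φ = z_1 and Φ Ψ = z_n − κ + Σ_{j=0}^{r−1} (d_j − d_{j−1}) ε_{nj}. -/

import Mathlib

/-- `ζ = e^{2πi/r}`. -/
noncomputable def zeta (r : ℕ) : ℂ := Complex.exp (2 * Real.pi * Complex.I / r)

theorem zeta_pow_self {r : ℕ} (hr : 0 < r) : zeta r ^ r = 1 := by
  rw [zeta, ← Complex.exp_nat_mul, mul_comm, div_mul_cancel₀, Complex.exp_two_pi_mul_I]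
  exact_mod_cast Nat.cast_ne_zero.mpr hr.ne'

theorem zeta_zpow_root (r : ℕ) (l : ℤ) : (zeta r ^ l) ^ r = 1 := by
  rcases Nat.eq_zero_or_pos r with h | h
  · rw [h, pow_zero]
  · rw [← zpow_natCast, ← zpow_mul, mul_comm, zpow_mul, zpow_natCast,
      zeta_pow_self h, one_zpow]

/-- The elements of `G(r,1,n)`: `n × n` monomial matrices whose nonzero entries are
`r`-th roots of unity. -/
def IsGMonomial (r n : ℕ) (w : Matrix (Fin n) (Fin n) ℂ) : Prop :=
  ∃ (σ : Equiv.Perm (Fin n)) (a : Fin n → ℂ), (∀ i, a i ^ r = 1) ∧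
    ∀ i j, w i j = if i = σ j then a j else 0

theorem IsGMonomial.mul {r n : ℕ} {w v : Matrix (Fin n) (Fin n) ℂ}
    (hw : IsGMonomial r n w) (hv : IsGMonomial r n v) : IsGMonomial r n (w * v) := by
  obtain ⟨σ, a, ha, hwe⟩ := hw
  obtain ⟨τ, b, hb, hve⟩ := hv
  refine ⟨σ * τ, fun j => a (τ j) * b j, fun j => by rw [mul_pow, ha, hb, one_mul], ?_⟩
  intro i j
  rw [Matrix.mul_apply, Finset.sum_eq_single (τ j)]
  · rw [hwe, hve, if_pos rfl, Equiv.Perm.mul_apply]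
    simp [ite_mul]
  · intro k _ hk
    rw [hve, if_neg hk, mul_zero]
  · simp

/-- The diagonal matrix `ζ_i^l`, with `ζ^l` in position `i` and `1`'s elsewhere. -/
noncomputable def zmat (r n : ℕ) (i : Fin n) (l : ℤ) : Matrix (Fin n) (Fin n) ℂ :=
  Matrix.diagonal (fun a => if a = i then zeta r ^ l else 1)

theorem isGMonomial_zmat (r : ℕ) {n : ℕ} (i : Fin n) (l : ℤ) :
    IsGMonomial r n (zmat r n i l) := by
  refine ⟨1, fun b => if b = i then zeta r ^ l else 1, ?_, ?_⟩
  · intro b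
    dsimp only
    split
    · exact zeta_zpow_root r l
    · exact one_pow r
  · intro a b
    rcases eq_or_ne a b with h | h
    · subst h; simp [zmat, Matrix.diagonal_apply]
    · simp [zmat, Matrix.diagonal_apply_ne _ h, Equiv.Perm.one_apply, h]

/-- The transposition (permutation) matrix `s_{ij}` interchanging coordinates `i` and `j`. -/
def smat {n : ℕ} (i j : Fin n) : Matrix (Fin n) (Fin n) ℂ :=
  Matrix.of fun a b => if a = Equiv.swap i j b then 1 else 0

theorem isGMonomial_smat (r : ℕ) {n : ℕ} (i j : Fin n) : IsGMonomial r n (smat i j) :=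
  ⟨Equiv.swap i j, fun _ => 1, fun _ => one_pow r, fun a b => by simp [smat]⟩

/-- The group `G(r,1,n)` of monomial matrices, as a subtype of matrices. -/
def GMon (r n : ℕ) : Type := {w : Matrix (Fin n) (Fin n) ℂ // IsGMonomial r n w}

/-- `ζ_i^l` as an element of `G(r,1,n)`. -/
noncomputable def zetaW (r : ℕ) {n : ℕ} (i : Fin n) (l : ℤ) : GMon r n :=
  ⟨zmat r n i l, isGMonomial_zmat r i l⟩

/-- `s_{ij}` as an element of `G(r,1,n)`. -/
noncomputable def sW (r : ℕ) {n : ℕ} (i j : Fin n) : GMon r n :=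
  ⟨smat i j, isGMonomial_smat r i j⟩

/-- The reflection `ζ_i^l s_{ij} ζ_i^{-l}` as an element of `G(r,1,n)`. -/
noncomputable def reflW (r : ℕ) {n : ℕ} (i j : Fin n) (l : ℤ) : GMon r n :=
  ⟨zmat r n i l * smat i j * zmat r n i (-l),
    ((isGMonomial_zmat r i l).mul (isGMonomial_smat r i j)).mul (isGMonomial_zmat r i (-l))⟩

/-- The element `ζ_i^l ζ_j^{-l}` of `G(r,1,n)`. -/
noncomputable def pairW (r : ℕ) {n : ℕ} (i j : Fin n) (l : ℤ) : GMon r n :=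
  ⟨zmat r n i l * zmat r n j (-l),
    (isGMonomial_zmat r i l).mul (isGMonomial_zmat r j (-l))⟩

/-- Generators of the rational Cherednik algebra of `G(r,1,n)`:
`x_1, …, x_n`, `y_1, …, y_n` and `t_w` for `w ∈ G(r,1,n)`. -/
inductive CGen (r n : ℕ) where
  | X (i : Fin n) : CGen r n
  | Y (i : Fin n) : CGen r n
  | T (w : GMon r n) : CGen r n

/-- The defining relations of the rational Cherednik algebra of `G(r,1,n)` with
parameters `κ, c₀, c_1, …, c_{r-1}`. -/
inductive CRel (r n : ℕ) (κ c₀ : ℂ) (c : ℕ → ℂ) :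
    FreeAlgebra ℂ (CGen r n) → FreeAlgebra ℂ (CGen r n) → Prop
  | t_mul (u w v : GMon r n) : u.1 = w.1 * v.1 → CRel r n κ c₀ c
      (FreeAlgebra.ι ℂ (.T u)) (FreeAlgebra.ι ℂ (.T w) * FreeAlgebra.ι ℂ (.T v))
  | t_one (u : GMon r n) : u.1 = 1 → CRel r n κ c₀ c (FreeAlgebra.ι ℂ (.T u)) 1
  | t_x (w : GMon r n) (i : Fin n) : CRel r n κ c₀ c
      (FreeAlgebra.ι ℂ (.T w) * FreeAlgebra.ι ℂ (.X i))
      (∑ j, (w.1⁻¹ i j) • (FreeAlgebra.ι ℂ (.X j) * FreeAlgebra.ι ℂ (.T w)))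
  | t_y (w : GMon r n) (i : Fin n) : CRel r n κ c₀ c
      (FreeAlgebra.ι ℂ (.T w) * FreeAlgebra.ι ℂ (.Y i))
      (∑ j, (w.1 j i) • (FreeAlgebra.ι ℂ (.Y j) * FreeAlgebra.ι ℂ (.T w)))
  | xx (i j : Fin n) : CRel r n κ c₀ c
      (FreeAlgebra.ι ℂ (.X i) * FreeAlgebra.ι ℂ (.X j))
      (FreeAlgebra.ι ℂ (.X j) * FreeAlgebra.ι ℂ (.X i))
  | yy (i j : Fin n) : CRel r n κ c₀ c
      (FreeAlgebra.ι ℂ (.Y i) * FreeAlgebra.ι ℂ (.Y j))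
      (FreeAlgebra.ι ℂ (.Y j) * FreeAlgebra.ι ℂ (.Y i))
  | yx_ne (i j : Fin n) : i ≠ j → CRel r n κ c₀ c
      (FreeAlgebra.ι ℂ (.Y i) * FreeAlgebra.ι ℂ (.X j))
      (FreeAlgebra.ι ℂ (.X j) * FreeAlgebra.ι ℂ (.Y i) +
        c₀ • ∑ l ∈ Finset.range r,
          (zeta r ^ (-(l : ℤ))) • FreeAlgebra.ι ℂ (.T (reflW r i j (l : ℤ))))
  | yx_eq (i : Fin n) : CRel r n κ c₀ c
      (FreeAlgebra.ι ℂ (.Y i) * FreeAlgebra.ι ℂ (.X i))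
      (FreeAlgebra.ι ℂ (.X i) * FreeAlgebra.ι ℂ (.Y i) + κ • (1 : FreeAlgebra ℂ (CGen r n))
        - ∑ l ∈ Finset.Ico 1 r,
            (c l * (1 - zeta r ^ (-(l : ℤ)))) • FreeAlgebra.ι ℂ (.T (zetaW r i (l : ℤ)))
        - c₀ • ∑ j ∈ Finset.univ.erase i, ∑ l ∈ Finset.range r,
            FreeAlgebra.ι ℂ (.T (reflW r i j (l : ℤ))))

variable (r n : ℕ) (κ c₀ : ℂ) (c : ℕ → ℂ)

/-- The image of `x_i` in the rational Cherednik algebra of `G(r,1,n)`. -/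
noncomputable def cX (i : Fin n) : RingQuot (CRel r n κ c₀ c) :=
  RingQuot.mkAlgHom ℂ (CRel r n κ c₀ c) (FreeAlgebra.ι ℂ (.X i))

/-- The image of `y_i` in the rational Cherednik algebra of `G(r,1,n)`. -/
noncomputable def cY (i : Fin n) : RingQuot (CRel r n κ c₀ c) :=
  RingQuot.mkAlgHom ℂ (CRel r n κ c₀ c) (FreeAlgebra.ι ℂ (.Y i))

/-- The image of `t_w` in the rational Cherednik algebra of `G(r,1,n)`. -/
noncomputable def cT (w : GMon r n) : RingQuot (CRel r n κ c₀ c) :=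
  RingQuot.mkAlgHom ℂ (CRel r n κ c₀ c) (FreeAlgebra.ι ℂ (.T w))

/-- `φ_i = Σ_{j<i} Σ_{l=0}^{r-1} t_{ζ_i^l s_{ij} ζ_i^{-l}}`. -/
noncomputable def cPhi (i : Fin n) : RingQuot (CRel r n κ c₀ c) :=
  ∑ j ∈ Finset.univ.filter (fun j : Fin n => j < i), ∑ l ∈ Finset.range r,
    cT r n κ c₀ c (reflW r i j (l : ℤ))

/-- The Dunkl–Opdam–Cherednik element `z_i = y_i x_i + c₀ φ_i`. -/
noncomputable def cz (i : Fin n) : RingQuot (CRel r n κ c₀ c) :=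
  cY r n κ c₀ c i * cX r n κ c₀ c i + c₀ • cPhi r n κ c₀ c i

/-- `π_i = Σ_{l=0}^{r-1} t_{ζ_i^l ζ_{i+1}^{-l}}` (here with the two indices `i`, `i+1`
passed separately). -/
noncomputable def cPi (i j : Fin n) : RingQuot (CRel r n κ c₀ c) :=
  ∑ l ∈ Finset.range r, cT r n κ c₀ c (pairW r i j (l : ℤ))

/-- The idempotent `ε_{ij} = (1/r) Σ_{l=0}^{r-1} ζ^{-lj} t_{ζ_i^l}`. -/
noncomputable def cEps (i : Fin n) (j : ℤ) : RingQuot (CRel r n κ c₀ c) :=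
  (r : ℂ)⁻¹ • ∑ l ∈ Finset.range r, (zeta r ^ (-(l : ℤ) * j)) • cT r n κ c₀ c (zetaW r i (l : ℤ))

/-- The reparametrised constants `d_j = Σ_{l=1}^{r-1} ζ^{lj} c_l`. -/
noncomputable def dpar (j : ℤ) : ℂ := ∑ l ∈ Finset.Ico 1 r, zeta r ^ ((l : ℤ) * j) * c l

variable (m : ℕ)

/-- The intertwiner `Φ = x_n t_{s_{n-1}} t_{s_{n-2}} ⋯ t_{s_1}` (with `n = m + 2`). -/
noncomputable def cPhiOp : RingQuot (CRel r (m + 2) κ c₀ c) :=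
  cX r (m + 2) κ c₀ c (Fin.last (m + 1)) *
    ((List.ofFn fun k : Fin (m + 1) =>
      cT r (m + 2) κ c₀ c (sW r k.castSucc k.succ)).reverse).prod

/-- The intertwiner `Ψ = y_1 t_{s_1} t_{s_2} ⋯ t_{s_{n-1}}` (with `n = m + 2`). -/
noncomputable def cPsiOp : RingQuot (CRel r (m + 2) κ c₀ c) :=
  cY r (m + 2) κ c₀ c 0 *
    (List.ofFn fun k : Fin (m + 1) =>
      cT r (m + 2) κ c₀ c (sW r k.castSucc k.succ)).prod

/-! `s_1 s_2 ⋯ s_{n-1}` is the `n`-cycle sending `n` to `1`, and `t_w` permutes the `x_i` and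
the `y_i` as `w` permutes coordinates. As the `t_{s_i}` are involutions, moving `x_n` (resp. `y_1`)
through the product of the `t_{s_i}` collapses `Ψ Φ` to `y_1 x_1 = z_1` and `Φ Ψ` to `x_n y_n`.
The commutation relation for `y_n x_n` turns `x_n y_n` into `z_n - κ` plus the terms
`c_l (1 - ζ^{-l}) t_{ζ_n^l}`, and discrete Fourier inversion over the `r`-th roots of unity regroups
these as `Σ_j (d_j - d_{j-1}) ε_{nj}`. -/

namespace List

variable {M : Type*} [Monoid M]

theorem prod_mul_prod_reverse_eq_one :
    ∀ {l : List M}, (∀ x ∈ l, x * x = 1) → l.prod * l.reverse.prod = 1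
  | [], _ => by simp
  | a :: l, h => by
    rw [prod_cons, reverse_cons, prod_append, prod_singleton, mul_assoc, ← mul_assoc l.prod,
      prod_mul_prod_reverse_eq_one fun x hx => h x (mem_cons_of_mem a hx), one_mul,
      h a mem_cons_self]

theorem prod_map_mul_eq_mul_prod_map {α β : Type*} (F : α → M) (g : α → Equiv.Perm β)
    (X : β → M) (hF : ∀ a i, F a * X i = X (g a i) * F a) :
    ∀ (l : List α) (i : β), (l.map F).prod * X i = X ((l.map g).prod i) * (l.map F).prod
  | [], i => by simp
  | a :: l, i => by
    rw [map_cons, map_cons, prod_cons, prod_cons, Equiv.Perm.mul_apply, mul_assoc,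
      prod_map_mul_eq_mul_prod_map F g X hF l i, ← mul_assoc, hF, mul_assoc]

end List

theorem prod_ofFn_swap_eq_formPerm :
    (List.ofFn fun k : Fin (m + 1) => Equiv.swap k.castSucc k.succ).prod
      = (List.finRange (m + 2)).formPerm := by
  rw [List.formPerm]
  congr 1
  apply List.ext_getElem
  · simp
  · intro i _ _
    simp only [List.getElem_ofFn, List.getElem_zipWith, List.getElem_tail, List.getElem_finRange]
    rfl

theorem prod_ofFn_swap_apply_last :
    (List.ofFn fun k : Fin (m + 1) => Equiv.swap k.castSucc k.succ).prod (Fin.last (m + 1))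
      = 0 := by
  have hcons : List.finRange (m + 2) = 0 :: List.ofFn fun i : Fin (m + 1) => i.succ := by
    rw [← List.ofFn_id, List.ofFn_succ]
    rfl
  rw [prod_ofFn_swap_eq_formPerm, hcons]
  convert List.formPerm_apply_getLast (0 : Fin (m + 2)) (List.ofFn fun i : Fin (m + 1) => i.succ)
  rw [List.getLast_cons (by simp), List.getLast_ofFn]
  rfl

theorem prod_reverse_ofFn_swap_apply_zero :
    (List.ofFn fun k : Fin (m + 1) => Equiv.swap k.castSucc k.succ).reverse.prod 0
      = Fin.last (m + 1) := by
  have hinv : (List.ofFn fun k : Fin (m + 1) => Equiv.swap k.castSucc k.succ).map (·⁻¹)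
      = List.ofFn fun k : Fin (m + 1) => Equiv.swap k.castSucc k.succ := by
    simp only [List.map_ofFn, Function.comp_def, Equiv.swap_inv]
  rw [← hinv, ← List.prod_inv_reverse, Equiv.Perm.inv_eq_iff_eq, prod_ofFn_swap_apply_last]

namespace IsPrimitiveRoot

open Finset

variable {K : Type*} [Field K] {ζ : K} {N : ℕ}

theorem sum_range_zpow_mul_zpow_neg (hζ : IsPrimitiveRoot ζ N) {k l : ℕ} (hk : k < N)
    (hl : l < N) :
    ∑ j ∈ range N, ζ ^ ((k : ℤ) * j) * ζ ^ (-(l : ℤ) * j) = if k = l then (N : K) else 0 := by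
  have hζ0 : ζ ≠ 0 := hζ.ne_zero (by omega)
  have hterm : ∀ j : ℕ, ζ ^ ((k : ℤ) * j) * ζ ^ (-(l : ℤ) * j) = (ζ ^ ((k : ℤ) - l)) ^ j := by
    intro j
    rw [← zpow_add₀ hζ0, ← zpow_natCast, ← zpow_mul]
    ring_nf
  simp_rw [hterm]
  split_ifs with hkl
  · simp [hkl]
  · have hne : ζ ^ ((k : ℤ) - l) ≠ 1 := by
      rw [Ne, hζ.zpow_eq_one_iff_dvd]
      intro hdvd
      have := Int.eq_zero_of_abs_lt_dvd hdvd (by rw [abs_sub_lt_iff]; omega)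
      omega
    have hpow : (ζ ^ ((k : ℤ) - l)) ^ N = 1 := by
      rw [← zpow_natCast, ← zpow_mul, mul_comm, zpow_mul, zpow_natCast, hζ.pow_eq_one, one_zpow]
    rw [geom_sum_eq hne, hpow, sub_self, zero_div]

theorem sum_range_sum_zpow_mul_mul_zpow_neg (hζ : IsPrimitiveRoot ζ N) (a : ℕ → K) {l : ℕ}
    (hl : l < N) :
    ∑ j ∈ range N, (∑ k ∈ range N, ζ ^ ((k : ℤ) * j) * a k) * ζ ^ (-(l : ℤ) * j)
      = N * a l := by
  simp_rw [sum_mul]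
  rw [sum_comm]
  calc _ = ∑ k ∈ range N, a k * (if k = l then (N : K) else 0) := by
        refine sum_congr rfl fun k hk => ?_
        rw [← hζ.sum_range_zpow_mul_zpow_neg (mem_range.mp hk) hl, mul_sum]
        exact sum_congr rfl fun j _ => by ring
    _ = N * a l := by simp [hl, mul_comm]

end IsPrimitiveRoot

theorem zeta_ne_zero : zeta r ≠ 0 :=
  Complex.exp_ne_zero _

section FourierInversion

open Finset

variable {r n κ c₀ c}

theorem zeta_isPrimitiveRoot (hr : 0 < r) : IsPrimitiveRoot (zeta r) r :=
  Complex.isPrimitiveRoot_exp r hr.ne'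

theorem dpar_sub_dpar_sub_one (hr : 0 < r) (j : ℤ) :
    dpar r c j - dpar r c (j - 1)
      = ∑ k ∈ range r, zeta r ^ ((k : ℤ) * j) * (c k * (1 - zeta r ^ (-(k : ℤ)))) := by
  rw [sum_range_eq_add_Ico _ hr, dpar, dpar, ← sum_sub_distrib]
  simp only [CharP.cast_eq_zero, neg_zero, zpow_zero, sub_self, mul_zero, zero_add]
  refine sum_congr rfl fun k _ => ?_
  rw [mul_sub_one, sub_eq_add_neg _ (k : ℤ), zpow_add₀ (zeta_ne_zero r)]
  ring

theorem sum_dpar_sub_mul_zpow_neg (hr : 0 < r) {l : ℕ} (hl : l < r) :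
    ∑ j ∈ range r,
        (dpar r c j - dpar r c (j - 1)) * ((r : ℂ)⁻¹ * zeta r ^ (-(l : ℤ) * j))
      = c l * (1 - zeta r ^ (-(l : ℤ))) := by
  have hr0 : (r : ℂ) ≠ 0 := by exact_mod_cast hr.ne'
  calc _ = (r : ℂ)⁻¹ * ∑ j ∈ range r,
          (∑ k ∈ range r, zeta r ^ ((k : ℤ) * j) * (c k * (1 - zeta r ^ (-(k : ℤ))))) *
            zeta r ^ (-(l : ℤ) * j) := by
        rw [mul_sum]
        exact sum_congr rfl fun j _ => by rw [dpar_sub_dpar_sub_one hr]; ring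
    _ = c l * (1 - zeta r ^ (-(l : ℤ))) := by
        rw [(zeta_isPrimitiveRoot hr).sum_range_sum_zpow_mul_mul_zpow_neg _ hl,
          inv_mul_cancel_left₀ hr0]

theorem sum_dpar_sub_smul_cEps (hr : 0 < r) (i : Fin n) :
    ∑ j ∈ range r,
        (dpar r c (j : ℤ) - dpar r c ((j : ℤ) - 1)) • cEps r n κ c₀ c i (j : ℤ)
      = ∑ l ∈ Ico 1 r,
          (c l * (1 - zeta r ^ (-(l : ℤ)))) • cT r n κ c₀ c (zetaW r i (l : ℤ)) := by
  calc _ = ∑ l ∈ range r,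
          (c l * (1 - zeta r ^ (-(l : ℤ)))) • cT r n κ c₀ c (zetaW r i (l : ℤ)) := by
        simp only [cEps, smul_sum, smul_smul]
        rw [sum_comm]
        refine sum_congr rfl fun l hl => ?_
        rw [← sum_smul, sum_dpar_sub_mul_zpow_neg hr (mem_range.mp hl)]
    _ = _ := by simp [sum_range_eq_add_Ico _ hr]

end FourierInversion

section Relations

variable {r n κ c₀ c}

theorem smat_mul_self (i j : Fin n) : smat i j * smat i j = 1 := by
  ext a b
  simp [smat, Matrix.mul_apply, Matrix.one_apply]

instance : One (GMon r n) :=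
  ⟨⟨1, 1, fun _ => 1, fun _ => one_pow r, fun i j => by
    by_cases h : i = j <;> simp [Matrix.one_apply, h]⟩⟩

theorem cT_mul_cT {u w v : GMon r n} (h : u.1 = w.1 * v.1) :
    cT r n κ c₀ c w * cT r n κ c₀ c v = cT r n κ c₀ c u := by
  simpa only [cT, map_mul] using (RingQuot.mkAlgHom_rel ℂ (CRel.t_mul u w v h)).symm

theorem cT_one : cT r n κ c₀ c 1 = 1 := by
  simpa only [cT, map_one] using
    RingQuot.mkAlgHom_rel ℂ (CRel.t_one (κ := κ) (c₀ := c₀) (c := c) 1 rfl)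

theorem cT_mul_cX (w : GMon r n) (i : Fin n) :
    cT r n κ c₀ c w * cX r n κ c₀ c i = ∑ j, w.1⁻¹ i j • (cX r n κ c₀ c j * cT r n κ c₀ c w) := by
  simpa only [cT, cX, map_mul, map_sum, map_smul] using RingQuot.mkAlgHom_rel ℂ (CRel.t_x w i)

theorem cT_mul_cY (w : GMon r n) (i : Fin n) :
    cT r n κ c₀ c w * cY r n κ c₀ c i = ∑ j, w.1 j i • (cY r n κ c₀ c j * cT r n κ c₀ c w) := by
  simpa only [cT, cY, map_mul, map_sum, map_smul] using RingQuot.mkAlgHom_rel ℂ (CRel.t_y w i)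

theorem cY_mul_cX_self (i : Fin n) :
    cY r n κ c₀ c i * cX r n κ c₀ c i
      = cX r n κ c₀ c i * cY r n κ c₀ c i + κ • 1
        - ∑ l ∈ Finset.Ico 1 r, (c l * (1 - zeta r ^ (-(l : ℤ)))) • cT r n κ c₀ c (zetaW r i l)
        - c₀ • ∑ j ∈ Finset.univ.erase i, ∑ l ∈ Finset.range r, cT r n κ c₀ c (reflW r i j l) := by
  simpa only [cT, cX, cY, map_mul, map_add, map_sub, map_sum, map_smul, map_one] using
    RingQuot.mkAlgHom_rel ℂ (CRel.yx_eq (κ := κ) (c₀ := c₀) (c := c) i)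

theorem cT_sW_mul_self (a b : Fin n) :
    cT r n κ c₀ c (sW r a b) * cT r n κ c₀ c (sW r a b) = 1 := by
  rw [cT_mul_cT (u := 1) (smat_mul_self a b).symm, cT_one]

theorem cT_sW_mul_cX (a b i : Fin n) :
    cT r n κ c₀ c (sW r a b) * cX r n κ c₀ c i
      = cX r n κ c₀ c (Equiv.swap a b i) * cT r n κ c₀ c (sW r a b) := by
  rw [cT_mul_cX, show (sW r a b).1⁻¹ = smat a b from
    Matrix.inv_eq_left_inv (smat_mul_self a b)]
  simp only [smat, Matrix.of_apply, ite_smul, one_smul, zero_smul]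
  simp_rw [eq_comm (a := i), Equiv.swap_apply_eq_iff, Finset.sum_ite_eq', Finset.mem_univ,
    if_true]

theorem cT_sW_mul_cY (a b i : Fin n) :
    cT r n κ c₀ c (sW r a b) * cY r n κ c₀ c i
      = cY r n κ c₀ c (Equiv.swap a b i) * cT r n κ c₀ c (sW r a b) := by
  rw [cT_mul_cY]
  simp [sW, smat, ite_smul]

end Relations

section Intertwiners

variable {r κ c₀ c m}

theorem forall_mem_ofFn_cT_sW_mul_self :
    ∀ x ∈ List.ofFn fun k : Fin (m + 1) => cT r (m + 2) κ c₀ c (sW r k.castSucc k.succ),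
      x * x = 1 := by
  simp [cT_sW_mul_self]

theorem cPsiOp_mul_cPhiOp :
    cPsiOp r κ c₀ c m * cPhiOp r κ c₀ c m = cY r (m + 2) κ c₀ c 0 * cX r (m + 2) κ c₀ c 0 := by
  have hX := List.prod_map_mul_eq_mul_prod_map
    (fun k : Fin (m + 1) => cT r (m + 2) κ c₀ c (sW r k.castSucc k.succ))
    (fun k => Equiv.swap k.castSucc k.succ) (cX r (m + 2) κ c₀ c) (fun _ _ => cT_sW_mul_cX ..)
    (List.finRange (m + 1)) (Fin.last (m + 1))
  rw [← List.ofFn_eq_map, ← List.ofFn_eq_map, prod_ofFn_swap_apply_last] at hX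
  rw [cPsiOp, cPhiOp, mul_assoc, ← mul_assoc (List.prod _), hX, mul_assoc,
    List.prod_mul_prod_reverse_eq_one forall_mem_ofFn_cT_sW_mul_self, mul_one]

theorem cPhiOp_mul_cPsiOp :
    cPhiOp r κ c₀ c m * cPsiOp r κ c₀ c m
      = cX r (m + 2) κ c₀ c (Fin.last (m + 1)) * cY r (m + 2) κ c₀ c (Fin.last (m + 1)) := by
  have hY := List.prod_map_mul_eq_mul_prod_map
    (fun k : Fin (m + 1) => cT r (m + 2) κ c₀ c (sW r k.castSucc k.succ))
    (fun k => Equiv.swap k.castSucc k.succ) (cY r (m + 2) κ c₀ c) (fun _ _ => cT_sW_mul_cY ..)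
    (List.finRange (m + 1)).reverse 0
  rw [List.map_reverse, List.map_reverse, ← List.ofFn_eq_map, ← List.ofFn_eq_map,
    prod_reverse_ofFn_swap_apply_zero] at hY
  have hinv := List.prod_mul_prod_reverse_eq_one
    (l := (List.ofFn fun k : Fin (m + 1) => cT r (m + 2) κ c₀ c (sW r k.castSucc k.succ)).reverse)
    fun x hx => forall_mem_ofFn_cT_sW_mul_self x (List.mem_reverse.mp hx)
  rw [List.reverse_reverse] at hinv
  rw [cPhiOp, cPsiOp, mul_assoc, ← mul_assoc (List.prod _), hY, mul_assoc, hinv, mul_one]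

end Intertwiners

section DunklOpdam

variable {r n κ c₀ c}

theorem cz_zero : cz r (n + 1) κ c₀ c 0 = cY r (n + 1) κ c₀ c 0 * cX r (n + 1) κ c₀ c 0 := by
  simp [cz, cPhi]

theorem cX_mul_cY_last :
    cX r (n + 1) κ c₀ c (Fin.last n) * cY r (n + 1) κ c₀ c (Fin.last n)
      = cz r (n + 1) κ c₀ c (Fin.last n) - κ • 1
        + ∑ l ∈ Finset.Ico 1 r,
            (c l * (1 - zeta r ^ (-(l : ℤ)))) • cT r (n + 1) κ c₀ c (zetaW r (Fin.last n) l) := by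
  have hlt : Finset.univ.filter (· < Fin.last n) = Finset.univ.erase (Fin.last n) := by
    ext j
    simp [Fin.lt_last_iff_ne_last]
  rw [cz, cPhi, hlt, cY_mul_cX_self]
  abel

end DunklOpdam

/-- `Ψ Φ = z_1` and `Φ Ψ = z_n - κ + Σ_j (d_j - d_{j-1}) ε_{nj}`. -/
theorem stmt11 (hr : 1 ≤ r) :
    cPsiOp r κ c₀ c m * cPhiOp r κ c₀ c m = cz r (m + 2) κ c₀ c 0
    ∧ cPhiOp r κ c₀ c m * cPsiOp r κ c₀ c m =
        cz r (m + 2) κ c₀ c (Fin.last (m + 1)) - κ • 1 +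
          ∑ j ∈ Finset.range r,
            (dpar r c (j : ℤ) - dpar r c ((j : ℤ) - 1)) • cEps r (m + 2) κ c₀ c (Fin.last (m + 1)) (j : ℤ) :=
  ⟨by rw [cPsiOp_mul_cPhiOp, cz_zero],
    by rw [cPhiOp_mul_cPsiOp, sum_dpar_sub_smul_cEps hr]; exact cX_mul_cY_last⟩
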